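/- arXiv:1904.07322 — 2 statements merged into one kernel-verified Lean document; each statement's English description precedes it below -/
import Mathlib

section
/- If (C, T, F) is a cotorsion torsion triple in an abelian category A, then every object of C has projective dimension at most one. -/
/-!
Let `X ∈ C`, let `q : B ↠ C₀` be an epimorphism and `0 → C₀ → E → X → 0` an extension.
Completeness gives `0 → B → T_B → K → 0` with `T_B ∈ T`; its pushout along `q` is
`0 → C₀ → Q → K → 0`, and `Q` is a quotient of `T_B`, hence lies in the torsion class `T`.
Since `Ext¹(X, Q) = 0`, the map `C₀ → Q` extends over `E`, which exhibits `E` as the pullback of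
`0 → C₀ → Q → K → 0` along some `θ : X → K`. The pullback of `0 → B → T_B → K → 0` along `θ` then
maps onto `E` over `q`, so `Ext¹(X, B) → Ext¹(X, C₀)` is onto.
-/

open CategoryTheory Category Limits

attribute [local instance] CategoryTheory.Abelian.hasFiniteBiproducts
attribute [local instance] CategoryTheory.Limits.HasFiniteBiproducts.of_hasFiniteProducts

universe w v u

namespace Paper

variable {A : Type u} [Category.{v} A] [Abelian A]

/-- `IsSes i p` expresses that `0 ⟶ X ⟶ Y ⟶ Z ⟶ 0` is a short exact sequence. -/
def IsSes {X Y Z : A} (i : X ⟶ Y) (p : Y ⟶ Z) : Prop :=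
  ∃ w : i ≫ p = 0, (ShortComplex.mk i p w).ShortExact

/-- `Ext¹(X, Y) = 0`, phrased as: every extension of `X` by `Y` splits. -/
def Ext1Zero (X Y : A) : Prop :=
  ∀ ⦃E : A⦄ (i : Y ⟶ E) (p : E ⟶ X), IsSes i p → ∃ s : X ⟶ E, s ≫ p = 𝟙 X

/-- A torsion pair `(T, F)` of (strictly full) subcategories of an abelian category. -/
structure IsTorsionPair (T F : Set A) : Prop where
  isoClosed_torsion : ∀ {X Y : A}, (X ≅ Y) → X ∈ T → Y ∈ T
  isoClosed_torsionFree : ∀ {X Y : A}, (X ≅ Y) → X ∈ F → Y ∈ F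
  hom_zero : ∀ {X Y : A}, X ∈ T → Y ∈ F → ∀ f : X ⟶ Y, f = 0
  seq : ∀ X : A, ∃ (tX fX : A) (i : tX ⟶ X) (p : X ⟶ fX), tX ∈ T ∧ fX ∈ F ∧ IsSes i p

/-- A (complete) cotorsion pair `(C, D)` in an abelian category. -/
structure IsCotorsionPair (C D : Set A) : Prop where
  left_eq : C = {X : A | ∀ Y ∈ D, Ext1Zero X Y}
  right_eq : D = {Y : A | ∀ X ∈ C, Ext1Zero X Y}
  seq₁ : ∀ X : A, ∃ (dX cX : A) (i : dX ⟶ cX) (p : cX ⟶ X), dX ∈ D ∧ cX ∈ C ∧ IsSes i p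
  seq₂ : ∀ X : A, ∃ (dX cX : A) (i : X ⟶ dX) (p : dX ⟶ cX), dX ∈ D ∧ cX ∈ C ∧ IsSes i p

/-- `f` factors through some object belonging to the class `P`. -/
def FactorsThroughClass (P : Set A) {X Y : A} (f : X ⟶ Y) : Prop :=
  ∃ (Z : A) (_ : Z ∈ P) (a : X ⟶ Z) (b : Z ⟶ Y), a ≫ b = f

/-- The hom-relation on the full subcategory on `S` identifying two morphisms whose
difference factors through an object of `P`. -/
def quotRel (S P : Set A) : HomRel (ObjectProperty.FullSubcategory (· ∈ S)) :=
  fun {X Y} f g =>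
    FactorsThroughClass P ((show X.obj ⟶ Y.obj from f.hom) - (show X.obj ⟶ Y.obj from g.hom))

/-- The additive quotient of the full subcategory on `S` by the morphisms factoring
through objects of `P`. -/
abbrev AddQuot (S P : Set A) := CategoryTheory.Quotient (quotRel S P)

/-- The subcategory of quotients of (finite direct sums of) objects of `T`. -/
def Fac (T : Set A) : Set A := {X : A | ∃ Y ∈ T, ∃ p : Y ⟶ X, Epi p}

/-- The right `Hom`-orthogonal `T^⊥`. -/
def rightHomPerp (T : Set A) : Set A := {X : A | ∀ Y ∈ T, ∀ f : Y ⟶ X, f = 0}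

/-- The left `Hom`-orthogonal `^⊥F`. -/
def leftHomPerp (F : Set A) : Set A := {X : A | ∀ Y ∈ F, ∀ f : X ⟶ Y, f = 0}

/-- The right `Ext¹`-orthogonal `T^{⊥₁}`. -/
def rightExt1Perp (T : Set A) : Set A := {X : A | ∀ Y ∈ T, Ext1Zero Y X}

/-- The left `Ext¹`-orthogonal `^{⊥₁}D`. -/
def leftExt1Perp (D : Set A) : Set A := {X : A | ∀ Y ∈ D, Ext1Zero X Y}

/-- `X` has projective dimension at most one: it has a length-one projective resolution. -/
def PdLeOne (X : A) : Prop :=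
  ∃ (P₁ P₀ : A) (i : P₁ ⟶ P₀) (p : P₀ ⟶ X), Projective P₁ ∧ Projective P₀ ∧ IsSes i p

/-- A weak tilting subcategory of an abelian category with enough projectives. -/
structure IsWeakTilting (T : Set A) : Prop where
  sum_mem : ∀ {X Y : A}, X ∈ T → Y ∈ T → (X ⊞ Y) ∈ T
  summand_mem : ∀ {X Y : A}, X ∈ T → (∃ (s : Y ⟶ X) (r : X ⟶ Y), s ≫ r = 𝟙 Y) → Y ∈ T
  ext1_zero : ∀ {X Y : A}, X ∈ T → Y ∈ T → Ext1Zero X Y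
  pd_le_one : ∀ X ∈ T, PdLeOne X
  coresolution : ∀ P : A, Projective P → ∃ (T₀ T₁ : A) (i : P ⟶ T₀) (p : T₀ ⟶ T₁),
    T₀ ∈ T ∧ T₁ ∈ T ∧ IsSes i p

/-- `φ : X ⟶ E` is a right `T`-approximation of `E`. -/
def IsRightApprox (T : Set A) {X E : A} (φ : X ⟶ E) : Prop :=
  X ∈ T ∧ ∀ X' ∈ T, ∀ f : X' ⟶ E, ∃ g : X' ⟶ X, g ≫ φ = f

/-- A tilting subcategory: a weak tilting subcategory that is contravariantly finite. -/
structure IsTilting (T : Set A) extends IsWeakTilting T : Prop where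
  contravariantly_finite : ∀ E : A, ∃ (X : A) (φ : X ⟶ E), IsRightApprox T φ


/-- `Ext²(X, −) = 0`, i.e. `X` has projective dimension at most one.  This is phrased
via the long exact sequence: for every epimorphism `q : B ↠ C`, the induced map
`Ext¹(X, B) → Ext¹(X, C)` is surjective, i.e. every extension of `X` by `C` is the
pushout along `q` of an extension of `X` by `B`. -/
def Ext2Zero (X : A) : Prop :=
  ∀ ⦃B C : A⦄ (q : B ⟶ C), Epi q →
    ∀ ⦃E : A⦄ (i : C ⟶ E) (p : E ⟶ X), IsSes i p →
      ∃ (E' : A) (i' : B ⟶ E') (p' : E' ⟶ X) (e : E' ⟶ E),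
        IsSes i' p' ∧ i' ≫ e = q ≫ i ∧ p' = e ≫ p

lemma IsSes.of_isPushout {A₀ B K A' P : A} {f : A₀ ⟶ B} {g : B ⟶ K} (hfg : IsSes f g)
    {h : A₀ ⟶ A'} {h' : B ⟶ P} {f' : A' ⟶ P} (sq : IsPushout f h h' f')
    {g' : P ⟶ K} (hg : h' ≫ g' = g) (hf' : f' ≫ g' = 0) : IsSes f' g' := by
  obtain ⟨_, hse⟩ := hfg
  have := hse.mono_f
  have := hse.epi_g
  have : Mono f' := Abelian.mono_inr_of_isColimit f h sq.isColimit
  have : Epi g' := epi_of_epi_fac hg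
  refine ⟨hf', { exact := ?_ }⟩
  refine ShortComplex.exact_of_g_is_cokernel _
    (CokernelCofork.IsColimit.ofπ' _ _ fun k (hk : f' ≫ k = 0) => ?_)
  obtain ⟨v, hv⟩ := CokernelCofork.IsColimit.desc' hse.gIsCokernel (h' ≫ k)
    (by rw [← assoc, sq.w, assoc, hk, comp_zero])
  exact ⟨v, sq.hom_ext (by simpa [← hg] using hv) (by simp [reassoc_of% hf', hk])⟩

lemma IsSes.of_isPullback {A₀ B K P X : A} {f : A₀ ⟶ B} {g : B ⟶ K} (hfg : IsSes f g)
    {fst : P ⟶ B} {snd : P ⟶ X} {t : X ⟶ K} (sq : IsPullback fst snd g t)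
    {f' : A₀ ⟶ P} (hf : f' ≫ fst = f) (hg' : f' ≫ snd = 0) : IsSes f' snd := by
  obtain ⟨_, hse⟩ := hfg
  have := hse.mono_f
  have := hse.epi_g
  have : Mono f' := mono_of_mono_fac hf
  have : Epi snd := Abelian.epi_snd_of_isLimit g t sq.isLimit
  refine ⟨hg', { exact := ?_ }⟩
  refine ShortComplex.exact_of_f_is_kernel _
    (KernelFork.IsLimit.ofι' _ _ fun k (hk : k ≫ snd = 0) => ?_)
  obtain ⟨v, hv⟩ := KernelFork.IsLimit.lift' hse.fIsKernel (k ≫ fst)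
    (by rw [assoc, sq.w, reassoc_of% hk, zero_comp])
  exact ⟨v, sq.hom_ext (by simpa [hf] using hv) (by simp [hg', hk])⟩

lemma IsTorsionPair.mem_torsion_of_forall_hom_eq_zero {T F : Set A} (ht : IsTorsionPair T F)
    {Z : A} (hZ : ∀ W ∈ F, ∀ f : Z ⟶ W, f = 0) : Z ∈ T := by
  obtain ⟨tZ, fZ, i, p, htZ, hfZ, _, hse⟩ := ht.seq Z
  have := hse.mono_f
  have := hse.exact.epi_f (hZ fZ hfZ p)
  have := isIso_of_mono_of_epi i
  exact ht.isoClosed_torsion (asIso i) htZ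

lemma IsTorsionPair.mem_torsion_of_epi {T F : Set A} (ht : IsTorsionPair T F) {Y Z : A}
    (hY : Y ∈ T) (e : Y ⟶ Z) [Epi e] : Z ∈ T :=
  ht.mem_torsion_of_forall_hom_eq_zero fun _ hW f =>
    (cancel_epi e).1 (by rw [ht.hom_zero hY hW (e ≫ f), comp_zero])

lemma Ext1Zero.exists_comp_eq {C₀ E X Q : A} (hX : Ext1Zero X Q) {i : C₀ ⟶ E} {p : E ⟶ X}
    (hip : IsSes i p) (f : C₀ ⟶ Q) : ∃ r : E ⟶ Q, i ≫ r = f := by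
  obtain ⟨E₁, u, i₁, sq⟩ : ∃ (E₁ : A) (u : E ⟶ E₁) (i₁ : Q ⟶ E₁), IsPushout i f u i₁ :=
    ⟨_, _, _, .of_hasPushout i f⟩
  obtain ⟨_, hS⟩ := hip.of_isPushout sq (sq.inl_desc p 0 (by simp [hip.1]))
    (sq.inr_desc _ _ _)
  obtain ⟨s, hs⟩ := hX _ _ ⟨_, hS⟩
  -- the pushout of the extension along `f` splits, and its retraction extends `f`
  let σ := ShortComplex.Splitting.ofExactOfSection _ hS.exact s hs hS.mono_f
  have hσ : i₁ ≫ σ.r = 𝟙 Q := σ.f_r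
  exact ⟨u ≫ σ.r, by rw [sq.w_assoc, hσ, comp_id]⟩

lemma IsSes.isPullback {C₀ E X Q K : A} {i : C₀ ⟶ E} {p : E ⟶ X} (hip : IsSes i p)
    {j : C₀ ⟶ Q} {π : Q ⟶ K} (hjπ : IsSes j π) {r : E ⟶ Q} {θ : X ⟶ K}
    (hr : i ≫ r = j) (w : r ≫ π = p ≫ θ) : IsPullback r p π θ := by
  obtain ⟨P, fst, snd, sq⟩ : ∃ (P : A) (fst : P ⟶ Q) (snd : P ⟶ X), IsPullback fst snd π θ :=
    ⟨_, _, _, .of_hasPullback π θ⟩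
  obtain ⟨hip₀, hip⟩ := hip
  obtain ⟨hP₀, hP⟩ := hjπ.of_isPullback sq (sq.lift_fst j 0 (by simp [hjπ.1]))
    (sq.lift_snd _ _ _)
  let φ : ShortComplex.mk i p hip₀ ⟶ ShortComplex.mk _ _ hP₀ :=
    { τ₁ := 𝟙 _
      τ₂ := sq.lift r p w
      τ₃ := 𝟙 _
      comm₁₂ := sq.hom_ext (by simp [hr]) (by simp [hip₀])
      comm₂₃ := by simp }
  have := ShortComplex.isIso₂_of_shortExact_of_isIso₁₃ φ hip hP
  exact sq.of_iso' (asIso φ.τ₂) (.refl _) (.refl _) (.refl _) (by simp [φ]) (by simp [φ])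
    (by simp) (by simp)

theorem exists_lift_of_ext1Zero_of_isPushout {B P K C₀ Q E X : A} {j : B ⟶ P} {π : P ⟶ K}
    (hjπ : IsSes j π) {q : B ⟶ C₀} {qt : P ⟶ Q} {j' : C₀ ⟶ Q} (sq : IsPushout j q qt j')
    (hX : Ext1Zero X Q) {i : C₀ ⟶ E} {p : E ⟶ X} (hip : IsSes i p) :
    ∃ (E' : A) (i' : B ⟶ E') (p' : E' ⟶ X) (e : E' ⟶ E),
      IsSes i' p' ∧ i' ≫ e = q ≫ i ∧ p' = e ≫ p := by
  obtain ⟨hip₀, hip'⟩ := id hip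
  let π' : Q ⟶ K := sq.desc π 0 (by simp [hjπ.1])
  have hj'π' : IsSes j' π' := hjπ.of_isPushout sq (sq.inl_desc _ _ _) (sq.inr_desc _ _ _)
  obtain ⟨r, hr⟩ := hX.exists_comp_eq hip j'
  obtain ⟨θ, hθ⟩ : ∃ θ : X ⟶ K, p ≫ θ = r ≫ π' :=
    ⟨_, (CokernelCofork.IsColimit.desc' hip'.gIsCokernel (r ≫ π')
      (by rw [← assoc, hr, hj'π'.1])).2⟩
  have sqE : IsPullback r p π' θ := hip.isPullback hj'π' hr hθ.symm
  obtain ⟨E', fst, p', sq'⟩ : ∃ (E' : A) (fst : E' ⟶ P) (p' : E' ⟶ X), IsPullback fst p' π θ :=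
    ⟨_, _, _, .of_hasPullback π θ⟩
  let i' := sq'.lift j 0 (by simp [hjπ.1])
  have hi'p' : IsSes i' p' := hjπ.of_isPullback sq' (sq'.lift_fst _ _ _) (sq'.lift_snd _ _ _)
  let e := sqE.lift (fst ≫ qt) p' (by rw [assoc, sq.inl_desc, sq'.w])
  refine ⟨E', i', p', e, hi'p', sqE.hom_ext ?_ ?_, (sqE.lift_snd _ _ _).symm⟩
  · simp [e, i', hr, sq.w]
  · simp [e, i', hip₀]

/-- In a cotorsion torsion triple `(C, T, F)`, every object of `C`
has projective dimension at most one. -/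
theorem statement6 {C T F : Set A} (hct : IsCotorsionPair C T) (ht : IsTorsionPair T F) :
    ∀ X ∈ C, Ext2Zero X := by
  intro X hX B C₀ q _ E i p hip
  obtain ⟨TB, CB, j, π, hTB, -, hjπ⟩ := hct.seq₂ B
  have hQ : pushout j q ∈ T := ht.mem_torsion_of_epi hTB (pushout.inl j q)
  rw [hct.left_eq] at hX
  exact exists_lift_of_ext1Zero_of_isPushout hjπ (.of_hasPushout j q) (hX _ hQ) hip

end Paper
end

section
/- Let (T, F, D) be a torsion cotorsion triple in an abelian category A (so (T, F) is a torsion pair and (F, D) is a complete cotorsion pair). Then the torsion functor t and the approximation functor d̃ induce mutually inverse equivalences T ≃ D/(D ∩ F). -/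
open CategoryTheory Category Limits

attribute [local instance] CategoryTheory.Abelian.hasFiniteBiproducts
attribute [local instance] CategoryTheory.Limits.HasFiniteBiproducts.of_hasFiniteProducts

universe w v u

namespace Paper

variable {A : Type u} [Category.{v} A] [Abelian A]

/-!
For a torsion object `X`, the special `D`-preenvelope `0 ⟶ X ⟶ d̃X ⟶ c̃X ⟶ 0` is also the torsion
sequence of `d̃X`, because `c̃X ∈ F`; so `t d̃X ≅ X`. For `Y ∈ D`, the torsion sequence
`0 ⟶ tY ⟶ Y ⟶ fY ⟶ 0` is a special `D`-preenvelope of `tY`, and any two special `D`-preenvelopes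
of an object are isomorphic modulo maps factoring through `D ∩ F`; so `d̃ tY ≅ Y` in `D/(D ∩ F)`.
-/

namespace IsSes

variable {X Y Z : A} {i : X ⟶ Y} {p : Y ⟶ Z}

lemma mono (h : IsSes i p) : Mono i := h.2.mono_f

lemma epi (h : IsSes i p) : Epi p := h.2.epi_g

lemma comp_eq_zero (h : IsSes i p) : i ≫ p = 0 := h.1

lemma exists_lift (h : IsSes i p) {W : A} (f : W ⟶ Y) (hf : f ≫ p = 0) :
    ∃ l : W ⟶ X, l ≫ i = f :=
  have := h.mono
  ⟨h.2.exact.lift f hf, h.2.exact.lift_f f hf⟩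

lemma exists_desc (h : IsSes i p) {W : A} (f : Y ⟶ W) (hf : i ≫ f = 0) :
    ∃ l : Z ⟶ W, p ≫ l = f :=
  have := h.epi
  ⟨h.2.exact.desc f hf, h.2.exact.g_desc f hf⟩

lemma pushout (h : IsSes i p) {W : A} (f : X ⟶ W) :
    IsSes (pushout.inr i f)
      (pushout.desc (f := i) (g := f) p 0 (by rw [h.comp_eq_zero, comp_zero])) := by
  have := h.mono
  have := h.epi
  set q := Limits.pushout.desc (f := i) (g := f) p 0 (by rw [h.comp_eq_zero, comp_zero])
  have hq : Limits.pushout.inr i f ≫ q = 0 := Limits.pushout.inr_desc _ _ _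
  have : Epi q := epi_of_epi_fac (Limits.pushout.inl_desc p 0 _)
  have hcoker : IsColimit (CokernelCofork.ofπ q hq) := by
    refine CokernelCofork.IsColimit.ofπ' q hq fun {V} k hk => ?_
    have hik : i ≫ Limits.pushout.inl i f ≫ k = 0 := by
      rw [← assoc, Limits.pushout.condition, assoc, hk, comp_zero]
    refine ⟨h.2.exact.desc _ hik, Limits.pushout.hom_ext ?_ ?_⟩
    · rw [← assoc, Limits.pushout.inl_desc, h.2.exact.g_desc]
    · rw [← assoc, Limits.pushout.inr_desc, zero_comp, hk]
  exact ⟨hq, { exact := ShortComplex.exact_of_g_is_cokernel _ hcoker }⟩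

/-- Pushing the sequence out along `f` gives an extension of `Z` by `W`; a splitting of it
restricts along `pushout.inl` to the required extension of `f`. -/
lemma exists_extend (h : IsSes i p) {W : A} (hZW : Ext1Zero Z W) (f : X ⟶ W) :
    ∃ g : Y ⟶ W, i ≫ g = f := by
  have hpush := h.pushout f
  obtain ⟨s, hs⟩ := hZW _ _ hpush
  let σ := ShortComplex.Splitting.ofExactOfSection _ hpush.2.exact s hs hpush.mono
  have hσ : Limits.pushout.inr i f ≫ σ.r = 𝟙 W := σ.f_r
  refine ⟨Limits.pushout.inl i f ≫ σ.r, ?_⟩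
  rw [← assoc, Limits.pushout.condition, assoc, hσ, comp_id]

end IsSes

lemma IsCotorsionPair.ext1Zero {C D : Set A} (hct : IsCotorsionPair C D) {X Y : A}
    (hX : X ∈ C) (hY : Y ∈ D) : Ext1Zero X Y := by
  rw [hct.left_eq] at hX
  exact hX Y hY

namespace IsTorsionPair

variable {T F : Set A}

lemma mem_torsionFree_of_forall_eq_zero (ht : IsTorsionPair T F) {X : A}
    (hX : ∀ Y ∈ T, ∀ f : Y ⟶ X, f = 0) : X ∈ F := by
  obtain ⟨tX, fX, i, p, htX, hfX, hses⟩ := ht.seq X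
  have := hses.epi
  have : Mono p := hses.2.exact.mono_g (hX tX htX i)
  have : IsIso p := isIso_of_mono_of_epi p
  exact ht.isoClosed_torsionFree (asIso p).symm hfX

lemma mem_torsionFree_of_isSes (ht : IsTorsionPair T F) {X Y Z : A} {i : X ⟶ Y}
    {p : Y ⟶ Z} (h : IsSes i p) (hX : X ∈ F) (hZ : Z ∈ F) : Y ∈ F := by
  refine ht.mem_torsionFree_of_forall_eq_zero fun V hV f => ?_
  obtain ⟨l, rfl⟩ := h.exists_lift f (ht.hom_zero hV hZ _)
  rw [ht.hom_zero hV hX l, zero_comp]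

end IsTorsionPair

section TorsionCotorsion

variable {T F D : Set A}

/-- Such a `δ` factors through `Q`, and `Q ⟶ W` extends over a special `D`-preenvelope of `Q`,
which lies in `D ∩ F` since `F` is closed under extensions. -/
lemma factorsThroughClass_of_isSes_of_comp_eq_zero (ht : IsTorsionPair T F)
    (hct : IsCotorsionPair F D) {K E Q W : A} {i : K ⟶ E} {p : E ⟶ Q} (h : IsSes i p)
    (hQ : Q ∈ F) (hW : W ∈ D) (δ : E ⟶ W) (hδ : i ≫ δ = 0) :
    FactorsThroughClass (D ∩ F) δ := by
  obtain ⟨δ', rfl⟩ := h.exists_desc δ hδ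
  obtain ⟨dQ, cQ, ι, π, hdQ, hcQ, hQses⟩ := hct.seq₂ Q
  obtain ⟨g, rfl⟩ := hQses.exists_extend (hct.ext1Zero hcQ hW) δ'
  exact ⟨dQ, ⟨hdQ, ht.mem_torsionFree_of_isSes hQses hQ hcQ⟩, p ≫ ι, g, assoc _ _ _⟩

lemma quotient_map_eq_of_isSes (ht : IsTorsionPair T F) (hct : IsCotorsionPair F D)
    {K Q : A} {E W : ObjectProperty.FullSubcategory (· ∈ D)} {i : K ⟶ E.obj} {p : E.obj ⟶ Q}
    (h : IsSes i p) (hQ : Q ∈ F) {g g' : E ⟶ W} (hg : i ≫ g.hom = i ≫ g'.hom) :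
    (Quotient.functor (quotRel D (D ∩ F))).map g =
      (Quotient.functor (quotRel D (D ∩ F))).map g' :=
  CategoryTheory.Quotient.sound _ <|
    factorsThroughClass_of_isSes_of_comp_eq_zero ht hct h hQ W.property _ <| by
      rw [Preadditive.comp_sub, hg, sub_self]

end TorsionCotorsion

structure TorsionSeq (T F : Set A) (X : A) where
  {tors : A}
  {free : A}
  ι : tors ⟶ X
  π : X ⟶ free
  tors_mem : tors ∈ T
  free_mem : free ∈ F
  isSes : IsSes ι π

/-- The sequence `0 ⟶ X ⟶ d̃X ⟶ c̃X ⟶ 0` of the paper, with `d̃X = obj` and `c̃X = coker`. -/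
structure SpecialPreenvelope (D F : Set A) (X : A) where
  {obj : A}
  {coker : A}
  ι : X ⟶ obj
  π : obj ⟶ coker
  obj_mem : obj ∈ D
  coker_mem : coker ∈ F
  isSes : IsSes ι π

noncomputable def IsTorsionPair.torsionSeq {T F : Set A} (ht : IsTorsionPair T F) (X : A) :
    TorsionSeq T F X :=
  Classical.choice <| by
    obtain ⟨_, _, i, p, hT, hF, h⟩ := ht.seq X
    exact ⟨⟨i, p, hT, hF, h⟩⟩

noncomputable def IsCotorsionPair.specialPreenvelope {F D : Set A} (hct : IsCotorsionPair F D)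
    (X : A) : SpecialPreenvelope D F X :=
  Classical.choice <| by
    obtain ⟨_, _, i, p, hD, hF, h⟩ := hct.seq₂ X
    exact ⟨⟨i, p, hD, hF, h⟩⟩

namespace TorsionSeq

variable {T F : Set A} (ht : IsTorsionPair T F) {X : A} (s : TorsionSeq T F X)

noncomputable def lift {Y : A} (hY : Y ∈ T) (f : Y ⟶ X) : Y ⟶ s.tors :=
  (s.isSes.exists_lift f (ht.hom_zero hY s.free_mem _)).choose

@[simp]
lemma lift_ι {Y : A} (hY : Y ∈ T) (f : Y ⟶ X) : s.lift ht hY f ≫ s.ι = f :=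
  (s.isSes.exists_lift f (ht.hom_zero hY s.free_mem _)).choose_spec

lemma hom_ext {Y : A} {g g' : Y ⟶ s.tors} (h : g ≫ s.ι = g' ≫ s.ι) : g = g' :=
  have := s.isSes.mono
  (cancel_mono s.ι).1 h

noncomputable def torsIso (s' : TorsionSeq T F X) : s.tors ≅ s'.tors where
  hom := s'.lift ht s.tors_mem s.ι
  inv := s.lift ht s'.tors_mem s'.ι
  hom_inv_id := s.hom_ext (by simp)
  inv_hom_id := s'.hom_ext (by simp)

@[simp]
lemma torsIso_hom_ι (s' : TorsionSeq T F X) : (s.torsIso ht s').hom ≫ s'.ι = s.ι := by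
  simp [torsIso]

abbrev toSpecialPreenvelope {D : Set A} (hX : X ∈ D) : SpecialPreenvelope D F s.tors :=
  ⟨s.ι, s.π, hX, s.free_mem, s.isSes⟩

end TorsionSeq

namespace SpecialPreenvelope

variable {F D : Set A} {X : A} (s : SpecialPreenvelope D F X)

abbrev toTorsionSeq {T : Set A} (hX : X ∈ T) : TorsionSeq T F s.obj :=
  ⟨s.ι, s.π, hX, s.coker_mem, s.isSes⟩

variable (hct : IsCotorsionPair F D)

noncomputable def extend {W : A} (hW : W ∈ D) (f : X ⟶ W) : s.obj ⟶ W :=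
  (s.isSes.exists_extend (hct.ext1Zero s.coker_mem hW) f).choose

@[simp]
lemma ι_extend {W : A} (hW : W ∈ D) (f : X ⟶ W) : s.ι ≫ s.extend hct hW f = f :=
  (s.isSes.exists_extend (hct.ext1Zero s.coker_mem hW) f).choose_spec

@[simp]
lemma ι_extend_assoc {W V : A} (hW : W ∈ D) (f : X ⟶ W) (g : W ⟶ V) :
    s.ι ≫ s.extend hct hW f ≫ g = f ≫ g := by
  rw [← assoc, ι_extend]

abbrev toQuot : AddQuot D (D ∩ F) := (Quotient.functor _).obj ⟨s.obj, s.obj_mem⟩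

variable {T : Set A} (ht : IsTorsionPair T F)

noncomputable def quotIso (s' : SpecialPreenvelope D F X) : s.toQuot ≅ s'.toQuot where
  hom := (Quotient.functor _).map (ObjectProperty.homMk (s.extend hct s'.obj_mem s'.ι))
  inv := (Quotient.functor _).map (ObjectProperty.homMk (s'.extend hct s.obj_mem s.ι))
  hom_inv_id := by
    rw [← Functor.map_comp, ← CategoryTheory.Functor.map_id]
    exact quotient_map_eq_of_isSes ht hct s.isSes s.coker_mem (by simp)
  inv_hom_id := by
    rw [← Functor.map_comp, ← CategoryTheory.Functor.map_id]
    exact quotient_map_eq_of_isSes ht hct s'.isSes s'.coker_mem (by simp)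

end SpecialPreenvelope

section Functors

variable {T F D : Set A} (ht : IsTorsionPair T F) (hct : IsCotorsionPair F D)

noncomputable def torsionMap {X Y : A} (f : X ⟶ Y) :
    (ht.torsionSeq X).tors ⟶ (ht.torsionSeq Y).tors :=
  (ht.torsionSeq Y).lift ht (ht.torsionSeq X).tors_mem ((ht.torsionSeq X).ι ≫ f)

@[simp]
lemma torsionMap_ι {X Y : A} (f : X ⟶ Y) :
    torsionMap ht f ≫ (ht.torsionSeq Y).ι = (ht.torsionSeq X).ι ≫ f :=
  TorsionSeq.lift_ι ..

@[simp]
lemma torsionMap_ι_assoc {X Y Z : A} (f : X ⟶ Y) (g : Y ⟶ Z) :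
    torsionMap ht f ≫ (ht.torsionSeq Y).ι ≫ g = (ht.torsionSeq X).ι ≫ f ≫ g := by
  rw [← assoc, torsionMap_ι, assoc]

noncomputable def preenvelopeMap {X Y : A} (f : X ⟶ Y) :
    (hct.specialPreenvelope X).obj ⟶ (hct.specialPreenvelope Y).obj :=
  (hct.specialPreenvelope X).extend hct (hct.specialPreenvelope Y).obj_mem
    (f ≫ (hct.specialPreenvelope Y).ι)

@[simp]
lemma ι_preenvelopeMap {X Y : A} (f : X ⟶ Y) :
    (hct.specialPreenvelope X).ι ≫ preenvelopeMap hct f = f ≫ (hct.specialPreenvelope Y).ι :=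
  SpecialPreenvelope.ι_extend ..

@[simp]
lemma ι_preenvelopeMap_assoc {X Y Z : A} (f : X ⟶ Y)
    (g : (hct.specialPreenvelope Y).obj ⟶ Z) :
    (hct.specialPreenvelope X).ι ≫ preenvelopeMap hct f ≫ g =
      f ≫ (hct.specialPreenvelope Y).ι ≫ g := by
  rw [← assoc, ι_preenvelopeMap, assoc]

noncomputable def torsionFunctor : A ⥤ ObjectProperty.FullSubcategory (· ∈ T) where
  obj X := ⟨(ht.torsionSeq X).tors, (ht.torsionSeq X).tors_mem⟩
  map f := ObjectProperty.homMk (torsionMap ht f)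
  map_id X :=
    ObjectProperty.hom_ext _ <| (ht.torsionSeq X).hom_ext (by simp [torsionMap])
  map_comp {_ _ Z} _ _ := ObjectProperty.hom_ext _ <| (ht.torsionSeq Z).hom_ext (by simp)

lemma torsionMap_eq_of_factorsThroughClass {X Y : A} {f g : X ⟶ Y}
    (h : FactorsThroughClass F (f - g)) : torsionMap ht f = torsionMap ht g := by
  obtain ⟨Z, hZ, a, b, hab⟩ := h
  refine (ht.torsionSeq Y).hom_ext ?_
  rw [torsionMap_ι, torsionMap_ι, ← sub_eq_zero, ← Preadditive.comp_sub, ← hab, ← assoc,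
    ht.hom_zero (ht.torsionSeq X).tors_mem hZ (_ ≫ a), zero_comp]

noncomputable def quotTorsionFunctor :
    AddQuot D (D ∩ F) ⥤ ObjectProperty.FullSubcategory (· ∈ T) :=
  CategoryTheory.Quotient.lift _ (ObjectProperty.ι _ ⋙ torsionFunctor ht)
    fun _ _ _ _ ⟨Z, hZ, a, b, hab⟩ => ObjectProperty.hom_ext _ <|
      torsionMap_eq_of_factorsThroughClass ht ⟨Z, hZ.2, a, b, hab⟩

noncomputable def preenvelopeFunctor : A ⥤ AddQuot D (D ∩ F) where
  obj X := (hct.specialPreenvelope X).toQuot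
  map f := (Quotient.functor _).map (ObjectProperty.homMk (preenvelopeMap hct f))
  map_id X := by
    rw [← CategoryTheory.Functor.map_id]
    exact quotient_map_eq_of_isSes ht hct (hct.specialPreenvelope X).isSes
      (hct.specialPreenvelope X).coker_mem (by simp)
  map_comp {X _ _} _ _ := by
    rw [← Functor.map_comp]
    exact quotient_map_eq_of_isSes ht hct (hct.specialPreenvelope X).isSes
      (hct.specialPreenvelope X).coker_mem (by simp)

lemma torsionMap_preenvelopeMap_comp_torsIso_hom {X Y : A} (hX : X ∈ T) (hY : Y ∈ T)
    (f : X ⟶ Y) :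
    torsionMap ht (preenvelopeMap hct f) ≫
        ((ht.torsionSeq _).torsIso ht ((hct.specialPreenvelope Y).toTorsionSeq hY)).hom =
      ((ht.torsionSeq _).torsIso ht ((hct.specialPreenvelope X).toTorsionSeq hX)).hom ≫ f := by
  refine ((hct.specialPreenvelope Y).toTorsionSeq hY).hom_ext ?_
  rw [assoc, TorsionSeq.torsIso_hom_ι, torsionMap_ι, assoc, ← ι_preenvelopeMap, ← assoc,
    TorsionSeq.torsIso_hom_ι]

lemma ι_preenvelopeMap_torsionMap_comp_extend {Y Y' : A} (hY : Y ∈ D) (hY' : Y' ∈ D)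
    (f : Y ⟶ Y') :
    (hct.specialPreenvelope _).ι ≫ preenvelopeMap hct (torsionMap ht f) ≫
        (hct.specialPreenvelope _).extend hct hY' (ht.torsionSeq Y').ι =
      (hct.specialPreenvelope _).ι ≫
        (hct.specialPreenvelope _).extend hct hY (ht.torsionSeq Y).ι ≫ f := by
  simp

noncomputable def torsionPreenvelopeIso :
    (ObjectProperty.ι (· ∈ T) ⋙ preenvelopeFunctor ht hct) ⋙ quotTorsionFunctor ht ≅ 𝟭 _ :=
  NatIso.ofComponents
    (fun X => ObjectProperty.isoMk _ <|
      (ht.torsionSeq _).torsIso ht ((hct.specialPreenvelope X.obj).toTorsionSeq X.property))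
    fun f => ObjectProperty.hom_ext _ <|
      torsionMap_preenvelopeMap_comp_torsIso_hom ht hct _ _ f.hom

noncomputable def preenvelopeTorsionIso :
    quotTorsionFunctor ht ⋙ ObjectProperty.ι (· ∈ T) ⋙ preenvelopeFunctor ht hct ≅ 𝟭 _ :=
  NatIso.ofComponents
    (fun Y => (hct.specialPreenvelope _).quotIso hct ht
      ((ht.torsionSeq Y.as.obj).toSpecialPreenvelope Y.as.property))
    fun {Y Y'} f => by
      obtain ⟨f, rfl⟩ := (Quotient.functor _).map_surjective f
      refine ((Quotient.functor _).map_comp _ _).symm.trans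
        (Eq.trans ?_ ((Quotient.functor _).map_comp _ _))
      exact quotient_map_eq_of_isSes ht hct (hct.specialPreenvelope _).isSes
        (hct.specialPreenvelope _).coker_mem
        (ι_preenvelopeMap_torsionMap_comp_extend ht hct Y.as.property Y'.as.property f.hom)

end Functors

/-- For a torsion cotorsion triple `(T, F, D)` — i.e. `(T, F)` is a
torsion pair and `(F, D)` a complete cotorsion pair — the torsion functor `t` and the
approximation functor `d̃` induce mutually inverse equivalences `T ≃ D/(D ∩ F)`:
there are mutually inverse functors `Φ = d̃|_T` and `Ψ = t|_D`, where `Φ X` is a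
special `D`-coapproximation of `X` (with cokernel in `F`) and `Ψ Y` is the torsion
subobject of `Y` (with cokernel in `F`). -/
theorem statement8 {T F D : Set A} (ht : IsTorsionPair T F) (hct : IsCotorsionPair F D) :
    ∃ (Φ : ObjectProperty.FullSubcategory (· ∈ T) ⥤ AddQuot D (D ∩ F))
      (Ψ : AddQuot D (D ∩ F) ⥤ ObjectProperty.FullSubcategory (· ∈ T)),
      Nonempty (Φ ⋙ Ψ ≅ 𝟭 (ObjectProperty.FullSubcategory (· ∈ T))) ∧
      Nonempty (Ψ ⋙ Φ ≅ 𝟭 (AddQuot D (D ∩ F))) ∧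
      (∀ X : ObjectProperty.FullSubcategory (· ∈ T),
        ∃ (cX : A) (_ : cX ∈ F) (i : X.obj ⟶ ((Φ.obj X).as).obj)
          (p : ((Φ.obj X).as).obj ⟶ cX), IsSes i p) ∧
      (∀ Y : AddQuot D (D ∩ F),
        ∃ (fY : A) (_ : fY ∈ F) (i : (Ψ.obj Y).obj ⟶ (Y.as).obj)
          (p : (Y.as).obj ⟶ fY), IsSes i p) :=
  ⟨ObjectProperty.ι _ ⋙ preenvelopeFunctor ht hct, quotTorsionFunctor ht,
    ⟨torsionPreenvelopeIso ht hct⟩, ⟨preenvelopeTorsionIso ht hct⟩,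
    fun X => let s := hct.specialPreenvelope X.obj; ⟨_, s.coker_mem, _, _, s.isSes⟩,
    fun Y => let s := ht.torsionSeq Y.as.obj; ⟨_, s.free_mem, _, _, s.isSes⟩⟩

end Paper
end
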